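/- Identifiability of the SNSS.sjd functional (Proposition 3(1), sufficiency). Let p ≥ 1, let A be an invertible real p×p matrix, let Λ₀ be a diagonal p×p matrix with strictly positive diagonal entries, and let Λ_{k,l} be diagonal p×p matrices for k = 1,…,K and l = 1,…,L such that for every pair i ≠ j there exists a pair (k,l) with (Λ_{k,l})ᵢᵢ/(Λ₀)ᵢᵢ ≠ (Λ_{k,l})ⱼⱼ/(Λ₀)ⱼⱼ. Set M₀ = A Λ₀ Aᵀ and M_{k,l} = A Λ_{k,l} Aᵀ. If U is an orthogonal p×p matrix such that U M₀^{-1/2} M_{k,l} M₀^{-1/2} Uᵀ is diagonal for all k = 1,…,K and l = 1,…,L, then there exists a signed permutation matrix Q such that U M₀^{-1/2} A = Q Λ₀^{-1/2}; in particular U M₀^{-1/2} A is a generalized permutation matrix. -/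

import Mathlib

open Matrix

/-- A signed permutation matrix: exactly one nonzero entry in each row and each
column, each such entry being `1` or `-1`. -/
def IsSignedPerm {p : ℕ} (Q : Matrix (Fin p) (Fin p) ℝ) : Prop :=
  (∀ i, ∃! j, Q i j ≠ 0) ∧ (∀ j, ∃! i, Q i j ≠ 0) ∧
  (∀ i j, Q i j ≠ 0 → Q i j = 1 ∨ Q i j = -1)

/-- A generalized permutation matrix: exactly one nonzero entry in each row and
each column. -/
def IsGenPerm {p : ℕ} (Q : Matrix (Fin p) (Fin p) ℝ) : Prop :=
  (∀ i, ∃! j, Q i j ≠ 0) ∧ (∀ j, ∃! i, Q i j ≠ 0)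

open scoped Classical in
/-- For a symmetric positive (semi)definite matrix `M`, `invSqrt M` is the inverse
of its unique positive semidefinite square root, i.e. `M^{-1/2}`. -/
noncomputable def invSqrt {p : ℕ} (M : Matrix (Fin p) (Fin p) ℝ) : Matrix (Fin p) (Fin p) ℝ :=
  if h : M.PosSemidef then
    ((h.1.eigenvectorUnitary : Matrix (Fin p) (Fin p) ℝ) *
      Matrix.diagonal (Real.sqrt ∘ h.1.eigenvalues) *
      (star h.1.eigenvectorUnitary : Matrix (Fin p) (Fin p) ℝ))⁻¹ else 0

lemma isDiag_mul_apply {n : Type*} [Fintype n] {D M : Matrix n n ℝ}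
    (hD : D.IsDiag) (i j : n) : (D * M) i j = D i i * M i j := by
  rw [Matrix.mul_apply]
  rw [Finset.sum_eq_single i (fun b _ hb => by rw [hD (Ne.symm hb), zero_mul])
    (fun h => absurd (Finset.mem_univ i) h)]

lemma mul_isDiag_apply {n : Type*} [Fintype n] {D M : Matrix n n ℝ}
    (hD : D.IsDiag) (i j : n) : (M * D) i j = M i j * D j j := by
  rw [Matrix.mul_apply]
  rw [Finset.sum_eq_single j (fun b _ hb => by rw [hD hb, mul_zero])
    (fun h => absurd (Finset.mem_univ j) h)]

lemma sqrt_aux {n : Type*} [Fintype n] [DecidableEq n] (M : Matrix n n ℝ) (h : M.PosSemidef) :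
    ((h.1.eigenvectorUnitary : Matrix n n ℝ) *
      Matrix.diagonal (Real.sqrt ∘ h.1.eigenvalues) *
      (star h.1.eigenvectorUnitary : Matrix n n ℝ)) *
    ((h.1.eigenvectorUnitary : Matrix n n ℝ) *
      Matrix.diagonal (Real.sqrt ∘ h.1.eigenvalues) *
      (star h.1.eigenvectorUnitary : Matrix n n ℝ)) = M := by
  have hu : (star h.1.eigenvectorUnitary : Matrix n n ℝ) * (h.1.eigenvectorUnitary : Matrix n n ℝ) = 1 :=
    Unitary.star_mul_self_of_mem h.1.eigenvectorUnitary.2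
  have hsp := h.1.spectral_theorem
  simp only [Unitary.conjStarAlgAut_apply] at hsp
  conv_rhs => rw [hsp]
  simp only [Matrix.mul_assoc]
  rw [← Matrix.mul_assoc _ _ (diagonal _ * _), hu, Matrix.one_mul,
    ← Matrix.mul_assoc (diagonal _), diagonal_mul_diagonal]
  congr 3
  funext i
  simp [Real.mul_self_sqrt (h.eigenvalues_nonneg i)]

/-- Identifiability of the SNSS.sjd functional (sufficiency). -/
theorem snss_sjd_identifiable {p K L : ℕ} (hp : 1 ≤ p)
    (A Λ₀ U : Matrix (Fin p) (Fin p) ℝ)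
    (Λ : Fin K → Fin L → Matrix (Fin p) (Fin p) ℝ)
    (hA : IsUnit A)
    (hΛ₀ : Λ₀.IsDiag) (hΛ₀pos : ∀ i, 0 < Λ₀ i i)
    (hΛ : ∀ k l, (Λ k l).IsDiag)
    (hsep : ∀ i j, i ≠ j → ∃ k l, Λ k l i i / Λ₀ i i ≠ Λ k l j j / Λ₀ j j)
    (hU : U * Uᵀ = 1)
    (hdiag : ∀ k l, (U * invSqrt (A * Λ₀ * Aᵀ) * (A * Λ k l * Aᵀ) *
      invSqrt (A * Λ₀ * Aᵀ) * Uᵀ).IsDiag) :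
    (∃ Q : Matrix (Fin p) (Fin p) ℝ, IsSignedPerm Q ∧
      U * invSqrt (A * Λ₀ * Aᵀ) * A = Q * Matrix.diagonal (fun i => (Real.sqrt (Λ₀ i i))⁻¹)) ∧
    IsGenPerm (U * invSqrt (A * Λ₀ * Aᵀ) * A) := by
  classical
  have hΛ₀eq : Λ₀ = Matrix.diagonal (Matrix.diag Λ₀) := (hΛ₀.diagonal_diag).symm
  have hdpos : ∀ i, (0:ℝ) < Matrix.diag Λ₀ i := fun i => hΛ₀pos i
  -- positive semidefiniteness of M₀
  have hM₀psd : (A * Λ₀ * Aᵀ).PosSemidef := by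
    have hD : (Matrix.diagonal (Matrix.diag Λ₀)).PosSemidef :=
      Matrix.posSemidef_diagonal_iff.mpr (fun i => (hdpos i).le)
    have h2 := hD.mul_mul_conjTranspose_same A
    rw [Matrix.conjTranspose_eq_transpose_of_trivial] at h2
    rw [hΛ₀eq]
    exact h2
  set S := ((hM₀psd.1.eigenvectorUnitary : Matrix (Fin p) (Fin p) ℝ) *
      Matrix.diagonal (Real.sqrt ∘ hM₀psd.1.eigenvalues) *
      (star hM₀psd.1.eigenvectorUnitary : Matrix (Fin p) (Fin p) ℝ)) with hSdef
  have hu : (star hM₀psd.1.eigenvectorUnitary : Matrix (Fin p) (Fin p) ℝ) *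
      (hM₀psd.1.eigenvectorUnitary : Matrix (Fin p) (Fin p) ℝ) = 1 :=
    Unitary.star_mul_self_of_mem hM₀psd.1.eigenvectorUnitary.2
  have hinv : invSqrt (A * Λ₀ * Aᵀ) = S⁻¹ := by
    rw [invSqrt, dif_pos hM₀psd]
  have hS2 : S * S = A * Λ₀ * Aᵀ := sqrt_aux _ hM₀psd
  have hST : Sᵀ = S := by
    rw [← Matrix.conjTranspose_eq_transpose_of_trivial]
    simp only [S, conjTranspose_mul, diagonal_conjTranspose, Matrix.mul_assoc]
    simp [Matrix.star_eq_conjTranspose]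
  -- invertibility of S
  have hdetA : IsUnit A.det := (Matrix.isUnit_iff_isUnit_det A).mp hA
  have hdetΛ₀ : Λ₀.det ≠ 0 := by
    rw [hΛ₀eq, Matrix.det_diagonal]
    exact ne_of_gt (Finset.prod_pos (fun i _ => hdpos i))
  have hdetM₀ : (A * Λ₀ * Aᵀ).det ≠ 0 := by
    rw [Matrix.det_mul, Matrix.det_mul, Matrix.det_transpose]
    exact mul_ne_zero (mul_ne_zero hdetA.ne_zero hdetΛ₀) hdetA.ne_zero
  have hdetS : IsUnit S.det := by
    have h3 : S.det * S.det = (A * Λ₀ * Aᵀ).det := by rw [← Matrix.det_mul, hS2]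
    refine isUnit_iff_ne_zero.mpr (fun h => hdetM₀ ?_)
    rw [← h3, h, mul_zero]
  have hSinv : S⁻¹ * S = 1 := Matrix.nonsing_inv_mul S hdetS
  have hSinv' : S * S⁻¹ = 1 := Matrix.mul_nonsing_inv S hdetS
  simp only [hinv] at hdiag ⊢
  set W := U * S⁻¹ * A with hW
  have hWT : Wᵀ = Aᵀ * (S⁻¹ * Uᵀ) := by
    rw [hW, Matrix.transpose_mul, Matrix.transpose_mul, Matrix.transpose_nonsing_inv, hST]
  have hAΛA : ∀ X : Matrix (Fin p) (Fin p) ℝ, A * (Λ₀ * (Aᵀ * X)) = S * (S * X) := by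
    intro X
    rw [← Matrix.mul_assoc, ← Matrix.mul_assoc, ← Matrix.mul_assoc, hS2, Matrix.mul_assoc]
  have hScan : ∀ X : Matrix (Fin p) (Fin p) ℝ, S⁻¹ * (S * X) = X := by
    intro X; rw [← Matrix.mul_assoc, hSinv, Matrix.one_mul]
  have hScan' : ∀ X : Matrix (Fin p) (Fin p) ℝ, S * (S⁻¹ * X) = X := by
    intro X; rw [← Matrix.mul_assoc, hSinv', Matrix.one_mul]
  -- key identity 1 : W Λ₀ Wᵀ = 1
  have key1 : W * Λ₀ * Wᵀ = 1 := by
    rw [hWT, hW]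
    simp only [Matrix.mul_assoc]
    rw [hAΛA, hScan, hScan', hU]
  -- diagonality in terms of W
  have hE : ∀ k l, (W * Λ k l * Wᵀ).IsDiag := by
    intro k l
    have heq : W * Λ k l * Wᵀ = U * S⁻¹ * (A * Λ k l * Aᵀ) * S⁻¹ * Uᵀ := by
      rw [hWT, hW]; simp only [Matrix.mul_assoc]
    rw [heq]; exact hdiag k l
  -- key identity 2
  have hleft : Λ₀ * Wᵀ * W = 1 := by
    rw [← mul_eq_one_comm, ← Matrix.mul_assoc]
    exact key1
  have key2 : ∀ k l, Λ k l * Wᵀ = Λ₀ * Wᵀ * (W * Λ k l * Wᵀ) := by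
    intro k l
    symm
    calc Λ₀ * Wᵀ * (W * Λ k l * Wᵀ)
        = Λ₀ * Wᵀ * (W * (Λ k l * Wᵀ)) := by rw [Matrix.mul_assoc W]
      _ = Λ₀ * Wᵀ * W * (Λ k l * Wᵀ) := by rw [← Matrix.mul_assoc]
      _ = Λ k l * Wᵀ := by rw [hleft, Matrix.one_mul]
  -- entrywise common ratio
  have hentry : ∀ k l m j, W j m ≠ 0 →
      (W * Λ k l * Wᵀ) j j = Λ k l m m / Λ₀ m m := by
    intro k l m j hjm
    have h3 := congrFun (congrFun (key2 k l) m) j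
    rw [isDiag_mul_apply (hΛ k l), mul_isDiag_apply (hE k l),
      isDiag_mul_apply hΛ₀, Matrix.transpose_apply] at h3
    rw [eq_div_iff (ne_of_gt (hΛ₀pos m))]
    apply mul_right_cancel₀ hjm
    linear_combination -h3
  -- row sums
  have hrow : ∀ i j, ∑ m, W i m * Λ₀ m m * W j m = (1 : Matrix (Fin p) (Fin p) ℝ) i j := by
    intro i j
    calc ∑ m, W i m * Λ₀ m m * W j m
        = ∑ m, (W * Λ₀) i m * Wᵀ m j := Finset.sum_congr rfl (fun m _ => by
          rw [mul_isDiag_apply hΛ₀, Matrix.transpose_apply])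
      _ = (W * Λ₀ * Wᵀ) i j := (Matrix.mul_apply).symm
      _ = (1 : Matrix (Fin p) (Fin p) ℝ) i j := by rw [key1]
  have hrow1 : ∀ j, ∑ m, W j m * Λ₀ m m * W j m = 1 := fun j => by
    rw [hrow j j, Matrix.one_apply_eq]
  have hrow0 : ∀ i j, i ≠ j → ∑ m, W i m * Λ₀ m m * W j m = 0 := fun i j hij => by
    rw [hrow i j, Matrix.one_apply_ne hij]
  -- each row has exactly one nonzero entry
  have hex : ∀ j, ∃ m, W j m ≠ 0 := by
    intro j
    by_contra h
    push_neg at h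
    have h1 := hrow1 j
    simp [h] at h1
  have huniq : ∀ j m m', W j m ≠ 0 → W j m' ≠ 0 → m = m' := by
    intro j m m' hm hm'
    by_contra hne
    obtain ⟨k, l, hkl⟩ := hsep m m' hne
    exact hkl ((hentry k l m j hm).symm.trans (hentry k l m' j hm'))
  have hrowu : ∀ j, ∃! m, W j m ≠ 0 := fun j => by
    obtain ⟨m, hm⟩ := hex j
    exact ⟨m, hm, fun y hy => huniq j y m hy hm⟩
  have hrowu' := hrowu
  choose σ hσ hσu using hrowu
  have hzero : ∀ j m, m ≠ σ j → W j m = 0 := fun j m hm => by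
    by_contra h; exact hm (hσu j m h)
  have hdiagval : ∀ j, W j (σ j) * Λ₀ (σ j) (σ j) * W j (σ j) = 1 := by
    intro j
    have h1 := hrow1 j
    rwa [Finset.sum_eq_single (σ j) (fun b _ hb => by rw [hzero j b hb]; ring)
      (fun h => absurd (Finset.mem_univ _) h)] at h1
  have hinj : Function.Injective σ := by
    intro j j' h
    by_contra hne
    have h0 := hrow0 j j' hne
    rw [Finset.sum_eq_single (σ j) (fun b _ hb => by rw [hzero j b hb]; ring)
      (fun h => absurd (Finset.mem_univ _) h)] at h0
    have h1 : W j' (σ j) ≠ 0 := by rw [h]; exact hσ j'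
    exact (mul_ne_zero (mul_ne_zero (hσ j) (ne_of_gt (hΛ₀pos (σ j)))) h1) h0
  have hsurj : Function.Surjective σ := Finite.surjective_of_injective hinj
  have hcolu : ∀ m, ∃! j, W j m ≠ 0 := by
    intro m
    obtain ⟨j, rfl⟩ := hsurj m
    exact ⟨j, hσ j, fun y hy => (hinj (hσu y _ hy)).symm⟩
  -- the signed permutation matrix
  set Q := W * Matrix.diagonal (fun i => Real.sqrt (Λ₀ i i)) with hQ
  have hs : ∀ i, (0:ℝ) < Real.sqrt (Λ₀ i i) := fun i => Real.sqrt_pos.mpr (hΛ₀pos i)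
  have hQapp : ∀ i j, Q i j = W i j * Real.sqrt (Λ₀ j j) := fun i j => by
    rw [hQ, Matrix.mul_diagonal]
  have hQne : ∀ i j, Q i j ≠ 0 ↔ W i j ≠ 0 := by
    intro i j
    rw [hQapp i j, mul_ne_zero_iff]
    exact ⟨fun h => h.1, fun h => ⟨h, (hs j).ne'⟩⟩
  have hQval : ∀ i j, Q i j ≠ 0 → Q i j = 1 ∨ Q i j = -1 := by
    intro i j hij
    have hWij : W i j ≠ 0 := (hQne i j).mp hij
    have hj : j = σ i := hσu i j hWij
    subst hj
    apply mul_self_eq_one_iff.mp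
    rw [hQapp]
    have h1 := hdiagval i
    have h2 : Real.sqrt (Λ₀ (σ i) (σ i)) * Real.sqrt (Λ₀ (σ i) (σ i)) = Λ₀ (σ i) (σ i) :=
      Real.mul_self_sqrt (hΛ₀pos _).le
    linear_combination h1 + W i (σ i) * W i (σ i) * h2
  have hfin : W = Q * Matrix.diagonal (fun i => (Real.sqrt (Λ₀ i i))⁻¹) := by
    rw [hQ, Matrix.mul_assoc, Matrix.diagonal_mul_diagonal]
    have h1 : (fun i => Real.sqrt (Λ₀ i i) * (Real.sqrt (Λ₀ i i))⁻¹) = fun _ => (1:ℝ) :=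
      funext fun i => mul_inv_cancel₀ (hs i).ne'
    rw [h1, Matrix.diagonal_one, Matrix.mul_one]
  refine ⟨⟨Q, ⟨?_, ?_, hQval⟩, hfin⟩, hrowu', hcolu⟩
  · intro i
    obtain ⟨m, hm, hmu⟩ := hrowu' i
    exact ⟨m, (hQne i m).mpr hm, fun y hy => hmu y ((hQne i y).mp hy)⟩
  · intro j
    obtain ⟨m, hm, hmu⟩ := hcolu j
    exact ⟨m, (hQne m j).mpr hm, fun y hy => hmu y ((hQne y j).mp hy)⟩
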